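/- Let S be a finite set of intervals, k ≥ 0 an integer, and I a k-valid independent set of S. Suppose (A, B) is a proper alternating path with respect to I with |A| = t and |B| = t + 1 for some integer t with k < t ≤ 2k + 1. Then (I \ A) ∪ B is a k-valid independent set of S. -/

import Mathlib

open Finset

/-- A nonempty closed interval `[l, r]` on the real line. -/
structure Ivl where
  l : ℝ
  r : ℝ
  hle : l ≤ r

noncomputable instance : DecidableEq Ivl := Classical.decEq _

/-- Two closed intervals intersect (have a common point). -/
def Ivl.meets (x y : Ivl) : Prop := x.l ≤ y.r ∧ y.l ≤ x.r

/-- The interval `y` is strictly contained in the interval `x`. -/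
def Ivl.strictIn (y x : Ivl) : Prop := x.l < y.l ∧ y.r < x.r

/-- `I` is an independent set (a pairwise disjoint subset) of the interval set `S`. -/
def IsIndep (S I : Finset Ivl) : Prop :=
  I ⊆ S ∧ ∀ x ∈ I, ∀ y ∈ I, x ≠ y → ¬ Ivl.meets x y

/-- `α(S)`: the maximum cardinality of an independent set of `S`. -/
noncomputable def alphaIvl (S : Finset Ivl) : ℕ :=
  sSup {n : ℕ | ∃ I : Finset Ivl, IsIndep S I ∧ I.card = n}

/-- `I` is a `k`-maximal independent set of `S`. -/
def IsKMaximal (S : Finset Ivl) (k : ℕ) (I : Finset Ivl) : Prop :=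
  IsIndep S I ∧
  ∀ t, t ≤ k → ∀ A, A ⊆ I → ∀ B, B ⊆ S \ I →
    A.card = t → B.card = t + 1 → ¬ IsIndep S ((I \ A) ∪ B)

/-- `I` is a `k`-valid independent set of `S`: it is `k`-maximal and no interval of
`S \ I` is strictly contained in an interval of `I` (no-containment property). -/
def IsKValid (S : Finset Ivl) (k : ℕ) (I : Finset Ivl) : Prop :=
  IsKMaximal S k I ∧ ∀ y ∈ S \ I, ∀ x ∈ I, ¬ Ivl.strictIn y x

/-- `(A, B)` induces an alternating path with respect to `I`, witnessed by the
left-to-right orderings `a` of `A` and `b` of `B`: `(I \ A) ∪ B` is independent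
and in the intersection graph of `I ∪ B` the set `A ∪ B` induces exactly the path
`b 0, a 0, b 1, a 1, …, a (t-1), b t` (consecutive intervals of this sequence
intersect, all other pairs among `A ∪ B` are disjoint, and no interval of `I \ A`
intersects an interval of `B`). -/
def IsAltPathWith (S I A B : Finset Ivl) (t : ℕ)
    (a : Fin t → Ivl) (b : Fin (t + 1) → Ivl) : Prop :=
  A ⊆ I ∧ B ⊆ S \ I ∧ A.card = t ∧ B.card = t + 1 ∧
  IsIndep S ((I \ A) ∪ B) ∧
  (∀ i, a i ∈ A) ∧ (∀ i, b i ∈ B) ∧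
  Function.Injective a ∧ Function.Injective b ∧
  (∀ i j : Fin t, i < j → (a i).r < (a j).l) ∧
  (∀ i j : Fin (t + 1), i < j → (b i).r < (b j).l) ∧
  (∀ (i : Fin t) (j : Fin (t + 1)),
    Ivl.meets (a i) (b j) ↔ (j = i.castSucc ∨ j = i.succ)) ∧
  (∀ x ∈ I, x ∉ A → ∀ j : Fin (t + 1), ¬ Ivl.meets x (b j))

/-- `(A, B)` induces an alternating path with respect to `I`. -/
def IsAltPath (S I A B : Finset Ivl) : Prop :=
  ∃ t a b, IsAltPathWith S I A B t a b

/-- The alternating path `(A, B)` is smallest: no alternating path `(A', B')`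
with `A' ⊊ A`. -/
def IsSmallestAltPath (S I A B : Finset Ivl) : Prop :=
  IsAltPath S I A B ∧ ¬ ∃ A' B' : Finset Ivl, A' ⊂ A ∧ IsAltPath S I A' B'

/-- The leftmost right endpoint property for the alternating path with orderings
`a`, `b`: each `b (j+1)` has the leftmost right endpoint among all intervals of `S`
whose left endpoint lies in `[r (b j), r (a j)]`, and `b 0` has the leftmost right
endpoint among all intervals of `S` whose left endpoint lies in `[r a', r (a 0))`,
where `a'` is the interval of `I` immediately to the left of `a 0` (the range is
`(-∞, r (a 0))` if no such interval exists). -/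
def LREP (S I : Finset Ivl) (t : ℕ) (a : Fin t → Ivl) (b : Fin (t + 1) → Ivl) : Prop :=
  (∀ j : Fin t,
    ((b j.castSucc).r ≤ (b j.succ).l ∧ (b j.succ).l ≤ (a j).r) ∧
    ∀ y ∈ S, (b j.castSucc).r ≤ y.l → y.l ≤ (a j).r → (b j.succ).r ≤ y.r) ∧
  (∀ h : 0 < t,
    ((∀ x ∈ I, x.r < (a ⟨0, h⟩).l → x.r ≤ (b 0).l) ∧ (b 0).l < (a ⟨0, h⟩).r) ∧
    ∀ y ∈ S, (∀ x ∈ I, x.r < (a ⟨0, h⟩).l → x.r ≤ y.l) → y.l < (a ⟨0, h⟩).r →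
      (b 0).r ≤ y.r)

/-- The rightmost left endpoint property: the mirror image (exchanging the roles of
left and right) of the leftmost right endpoint property `LREP`. -/
def RLEP (S I : Finset Ivl) (t : ℕ) (a : Fin t → Ivl) (b : Fin (t + 1) → Ivl) : Prop :=
  (∀ j : Fin t,
    ((a j).l ≤ (b j.castSucc).r ∧ (b j.castSucc).r ≤ (b j.succ).l) ∧
    ∀ y ∈ S, (a j).l ≤ y.r → y.r ≤ (b j.succ).l → y.l ≤ (b j.castSucc).l) ∧
  (∀ h : 0 < t,
    ((a ⟨t - 1, Nat.sub_lt h Nat.one_pos⟩).l < (b (Fin.last t)).r ∧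
      (∀ x ∈ I, (a ⟨t - 1, Nat.sub_lt h Nat.one_pos⟩).r < x.l →
        (b (Fin.last t)).r ≤ x.l)) ∧
    ∀ y ∈ S, (a ⟨t - 1, Nat.sub_lt h Nat.one_pos⟩).l < y.r →
      (∀ x ∈ I, (a ⟨t - 1, Nat.sub_lt h Nat.one_pos⟩).r < x.l → y.r ≤ x.l) →
      y.l ≤ (b (Fin.last t)).l)

/-- A proper alternating path: a smallest alternating path satisfying the leftmost
right endpoint property. -/
def IsProperAltPath (S I A B : Finset Ivl) : Prop :=
  IsSmallestAltPath S I A B ∧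
  ∀ t a b, IsAltPathWith S I A B t a b → LREP S I t a b

/-- `B` is a left substitute of `A` (with respect to the `k`-valid independent set
`I` of `S`): `|B| = |A|`, the pair `(A, B)` cannot be extended to an alternating
path of sizes `t`, `t + 1` for any `t ≤ 2k`, and, writing `aj` for the rightmost
interval of `A`, if `aj` were not there then `(A \ {aj}, B)` would be a proper
alternating path. -/
def IsLeftSubstitute (S : Finset Ivl) (k : ℕ) (I A B : Finset Ivl) : Prop :=
  A ⊆ I ∧ B ⊆ S \ I ∧ B.card = A.card ∧
  (∀ t, t ≤ 2 * k → ¬ ∃ A'' B'' : Finset Ivl, A ⊆ A'' ∧ B ⊆ B'' ∧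
    A''.card = t ∧ B''.card = t + 1 ∧ IsAltPath S I A'' B'') ∧
  ∃ aj ∈ A, (∀ x ∈ A, x ≠ aj → x.r < aj.l) ∧
    IsProperAltPath (S.erase aj) (I.erase aj) (A.erase aj) B

/-- `B` is a right substitute of `A`: defined symmetrically to `IsLeftSubstitute`,
with the leftmost interval `a1` of `A` in place of the rightmost one. -/
def IsRightSubstitute (S : Finset Ivl) (k : ℕ) (I A B : Finset Ivl) : Prop :=
  A ⊆ I ∧ B ⊆ S \ I ∧ B.card = A.card ∧
  (∀ t, t ≤ 2 * k → ¬ ∃ A'' B'' : Finset Ivl, A ⊆ A'' ∧ B ⊆ B'' ∧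
    A''.card = t ∧ B''.card = t + 1 ∧ IsAltPath S I A'' B'') ∧
  ∃ a1 ∈ A, (∀ x ∈ A, x ≠ a1 → a1.r < x.l) ∧
    IsProperAltPath (S.erase a1) (I.erase a1) (A.erase a1) B


/-!
Every improving exchange `(X, Y)` of an independent set with the no-containment property splits
into the connected components of the intersection graph of `X ∪ Y`. Consecutive intervals of `Y`
in a component are linked by distinct intervals of `X`, so a component gains at most one
interval, and a component gaining one is an alternating path.

No-containment survives the exchange: an interval strictly inside some `b j` contradicts the
leftmost right endpoint property if it is an old one, lies in `b 0` or meets `a (j-1)`; otherwise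
it meets no interval of `I`, against maximality, or it starts the alternating path
`y, a j, b (j+1), …, b t`, against minimality of `A`.

For `k`-maximality, an improving exchange of `(I \ A) ∪ B` removing at most `k` intervals may be
taken connected. Composed with `(A, B)` it gains two intervals over `I`, so it has two components
that are alternating paths of `I`. By `k`-maximality and minimality of `A`, each of them removes
an interval of `A` and an interval of the small exchange lying left or right of the path. Two such
intervals on the same side make the two components touch; on opposite sides, the connected small
exchange has to remove every `b j`, which is more than `k` intervals.
-/

namespace Ivl

variable {x y z : Ivl}

lemma meets_comm : x.meets y ↔ y.meets x := and_comm

lemma meets_of_mem {p : ℝ} (hx : x.l ≤ p ∧ p ≤ x.r) (hy : y.l ≤ p ∧ p ≤ y.r) : x.meets y :=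
  ⟨hx.1.trans hy.2, hy.1.trans hx.2⟩

lemma not_meets_iff : ¬ x.meets y ↔ y.r < x.l ∨ x.r < y.l := by
  simp only [meets, not_and_or, not_le]

lemma strictIn.meets (h : y.strictIn x) : x.meets y :=
  ⟨(h.1.trans_le y.hle).le, (y.hle.trans_lt h.2).le⟩

lemma strictIn.meets_of_meets (h : y.strictIn x) (hz : z.meets y) : z.meets x :=
  ⟨hz.1.trans h.2.le, h.1.le.trans hz.2⟩

lemma strictIn_of_meets_of_meets {y₁ y₂ y₃ : Ivl} (h₁ : x.meets y₁) (h₃ : x.meets y₃)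
    (h₁₂ : y₁.r < y₂.l) (h₂₃ : y₂.r < y₃.l) : y₂.strictIn x :=
  ⟨h₁.1.trans_lt h₁₂, h₂₃.trans_le h₃.2⟩

end Ivl

def NoContainment (S I : Finset Ivl) : Prop := ∀ y ∈ S \ I, ∀ x ∈ I, ¬ y.strictIn x

def IsExchange (S I X Y : Finset Ivl) : Prop := X ⊆ I ∧ Y ⊆ S \ I ∧ IsIndep S ((I \ X) ∪ Y)

section Exchange

variable {S I J X Y : Finset Ivl}

lemma IsIndep.subset (hJ : IsIndep S J) (hX : X ⊆ J) : IsIndep S X :=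
  ⟨hX.trans hJ.1, fun x hx y hy => hJ.2 x (hX hx) y (hX hy)⟩

lemma IsIndep.eq_of_meets (hJ : IsIndep S J) {x y : Ivl} (hx : x ∈ J) (hy : y ∈ J)
    (h : x.meets y) : x = y := by
  by_contra hne
  exact hJ.2 x hx y hy hne h

lemma IsIndep.sdiff_union (hJ : IsIndep S J) (hY : IsIndep S Y)
    (hsep : ∀ x ∈ J \ X, ∀ y ∈ Y, ¬ x.meets y) : IsIndep S ((J \ X) ∪ Y) := by
  refine ⟨union_subset (sdiff_subset.trans hJ.1) hY.1, ?_⟩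
  simp only [mem_union]
  rintro x (hx | hx) y (hy | hy) hne
  · exact hJ.2 x (mem_sdiff.1 hx).1 y (mem_sdiff.1 hy).1 hne
  · exact hsep x hx y hy
  · exact fun h => hsep y hy x hx (Ivl.meets_comm.1 h)
  · exact hY.2 x hx y hy hne

lemma IsExchange.card_add (h : IsExchange S I X Y) :
    ((I \ X) ∪ Y).card + X.card = I.card + Y.card := by
  have hdisj : Disjoint (I \ X) Y :=
    disjoint_right.2 fun y hy hyI => (mem_sdiff.1 (h.2.1 hy)).2 (mem_sdiff.1 hyI).1
  rw [card_union_of_disjoint hdisj, card_sdiff_of_subset h.1]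
  have := card_le_card h.1
  omega

lemma isExchange_sdiff {E : Finset Ivl} (hE : IsIndep S E) : IsExchange S I (I \ E) (E \ I) := by
  refine ⟨sdiff_subset, fun y hy => ?_, ?_⟩
  · exact mem_sdiff.2 ⟨hE.1 (mem_sdiff.1 hy).1, (mem_sdiff.1 hy).2⟩
  · convert hE using 1
    ext x
    simp only [mem_union, mem_sdiff]
    tauto

lemma IsExchange.comp {X' Y' E : Finset Ivl} (hXY : IsExchange S I X Y)
    (hX'Y' : IsExchange S ((I \ X) ∪ Y) X' Y') (hE : E = (((I \ X) ∪ Y) \ X') ∪ Y') :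
    IsExchange S I (I \ E) (E \ I) ∧
      (E \ I).card + X.card + X'.card = (I \ E).card + Y.card + Y'.card ∧ (I \ E) \ X ⊆ X' := by
  refine ⟨isExchange_sdiff (hE ▸ hX'Y'.2.2), ?_, fun x hx => ?_⟩
  · have h₁ := hXY.card_add
    have h₂ := hX'Y'.card_add
    have h₃ := card_sdiff_add_card_inter E I
    have h₄ := card_sdiff_add_card_inter I E
    rw [inter_comm] at h₄
    rw [← hE] at h₂
    omega
  · simp only [hE, mem_sdiff, mem_union, not_or, not_and, not_not] at hx
    exact hx.1.2.1 (Or.inl ⟨hx.1.1, hx.2⟩)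

lemma IsKMaximal.mono {k k' : ℕ} (h : IsKMaximal S k I) (hk : k' ≤ k) : IsKMaximal S k' I :=
  ⟨h.1, fun t ht => h.2 t (ht.trans hk)⟩

lemma IsKMaximal.lt_card {k : ℕ} (h : IsKMaximal S k I) (hXY : IsExchange S I X Y)
    (hcard : Y.card = X.card + 1) : k < X.card := by
  by_contra hle
  exact h.2 X.card (not_lt.1 hle) X hXY.1 Y hXY.2.1 rfl hcard hXY.2.2

lemma IsKMaximal.exists_meets {k : ℕ} (h : IsKMaximal S k I) {y : Ivl} (hy : y ∈ S \ I) :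
    ∃ x ∈ I, x.meets y := by
  by_contra! hfree
  refine h.2 0 (Nat.zero_le k) ∅ (empty_subset I) {y} (singleton_subset_iff.2 hy) rfl rfl
    (h.1.sdiff_union ⟨singleton_subset_iff.2 (mem_sdiff.1 hy).1, ?_⟩ ?_)
  · simp
  · simp only [sdiff_empty, mem_singleton]
    rintro x hx _ rfl
    exact hfree x hx

end Exchange

def Reach (V : Finset Ivl) : Ivl → Ivl → Prop :=
  Relation.ReflTransGen fun u v => u ∈ V ∧ v ∈ V ∧ u.meets v

namespace Reach

variable {V : Finset Ivl} {u v : Ivl}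

lemma single (hu : u ∈ V) (hv : v ∈ V) (h : u.meets v) : Reach V u v :=
  Relation.ReflTransGen.single ⟨hu, hv, h⟩

lemma trans {w : Ivl} (h₁ : Reach V u v) (h₂ : Reach V v w) : Reach V u w :=
  Relation.ReflTransGen.trans h₁ h₂

lemma symm (h : Reach V u v) : Reach V v u := by
  induction h with
  | refl => exact Relation.ReflTransGen.refl
  | tail _ hvw ih => exact (single hvw.2.1 hvw.1 (Ivl.meets_comm.1 hvw.2.2)).trans ih

lemma mem (h : Reach V u v) (hu : u ∈ V) : v ∈ V := by
  induction h with
  | refl => exact hu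
  | tail _ hvw _ => exact hvw.2.1

lemma exists_cover (h : Reach V u v) {p : ℝ} (hup : u.l ≤ p) (hpv : p ≤ v.r) :
    ∃ w, Reach V u w ∧ w.l ≤ p ∧ p ≤ w.r := by
  induction h with
  | refl => exact ⟨u, Relation.ReflTransGen.refl, hup, hpv⟩
  | @tail v w huv hvw ih =>
    by_cases hp : p ≤ v.r
    · exact ih hp
    · exact ⟨w, huv.tail hvw, (hvw.2.2.2.trans (not_le.1 hp).le), hpv⟩

lemma exists_meets_of_not (h : Reach V u v) (P : Ivl → Prop) (hu : P u) (hv : ¬ P v) :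
    ∃ w ∈ V, ∃ z ∈ V, P w ∧ ¬ P z ∧ w.meets z := by
  induction h with
  | refl => exact absurd hu hv
  | @tail v w _ hvw ih =>
    by_cases hPv : P v
    · exact ⟨v, hvw.1, w, hvw.2.1, hPv, hv, hvw.2.2⟩
    · exact ih hPv

end Reach

structure IsComponent (V C : Finset Ivl) : Prop where
  subset : C ⊆ V
  reach : ∀ u ∈ C, ∀ v ∈ C, Reach C u v
  mem_of_meets : ∀ u ∈ C, ∀ v ∈ V, u.meets v → v ∈ C

namespace IsComponent

variable {V C C' : Finset Ivl}

lemma eq_of_mem (hC : IsComponent V C) (hC' : IsComponent V C') {w : Ivl} (hw : w ∈ C)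
    (hw' : w ∈ C') : C = C' := by
  have key : ∀ {D D'}, IsComponent V D → IsComponent V D' → w ∈ D → w ∈ D' → D ⊆ D' := by
    intro D D' hD hD' hwD hwD' u hu
    have h := hD.reach w hwD u hu
    clear hu
    induction h with
    | refl => exact hwD'
    | tail _ hvu ih => exact hD'.mem_of_meets _ ih _ (hD.subset hvu.2.1) hvu.2.2
  exact Subset.antisymm (key hC hC' hw hw') (key hC' hC hw' hw)

lemma eq_of_meets (hC : IsComponent V C) (hC' : IsComponent V C') {w w' : Ivl} (hw : w ∈ C)
    (hw' : w' ∈ C') (h : w.meets w') : C = C' :=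
  hC.eq_of_mem hC' (hC.mem_of_meets w hw w' (hC'.subset hw') h) hw'

lemma disjoint (hC : IsComponent V C) (hC' : IsComponent V C') (hne : C ≠ C') :
    Disjoint C C' :=
  disjoint_left.2 fun _ hw hw' => hne (hC.eq_of_mem hC' hw hw')

lemma exists_cover (hC : IsComponent V C) {u v : Ivl} (hu : u ∈ C) (hv : v ∈ C) {p : ℝ}
    (hup : u.l ≤ p) (hpv : p ≤ v.r) : ∃ w ∈ C, w.l ≤ p ∧ p ≤ w.r := by
  obtain ⟨w, huw, hw⟩ := (hC.reach u hu v hv).exists_cover hup hpv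
  exact ⟨w, huw.mem hu, hw⟩

lemma eq_of_cover (hC : IsComponent V C) (hC' : IsComponent V C') {u v u' v' : Ivl} {p : ℝ}
    (hu : u ∈ C) (hv : v ∈ C) (hu' : u' ∈ C') (hv' : v' ∈ C') (hup : u.l ≤ p) (hpv : p ≤ v.r)
    (hu'p : u'.l ≤ p) (hpv' : p ≤ v'.r) : C = C' := by
  obtain ⟨w, hw, hwp⟩ := hC.exists_cover hu hv hup hpv
  obtain ⟨w', hw', hw'p⟩ := hC'.exists_cover hu' hv' hu'p hpv'
  exact hC.eq_of_meets hC' hw hw' (Ivl.meets_of_mem hwp hw'p)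

end IsComponent

open Classical in
noncomputable def component (V : Finset Ivl) (u : Ivl) : Finset Ivl := V.filter (Reach V u)

lemma mem_component {V : Finset Ivl} {u v : Ivl} :
    v ∈ component V u ↔ v ∈ V ∧ Reach V u v := by
  classical exact mem_filter

lemma isComponent_component {V : Finset Ivl} {u : Ivl} :
    IsComponent V (component V u) := by
  have reach_self : ∀ {v}, Reach V u v → Reach (component V u) u v := by
    intro v h
    induction h with
    | refl => exact Relation.ReflTransGen.refl
    | @tail v w huv hvw ih =>
      exact ih.tail ⟨mem_component.2 ⟨hvw.1, huv⟩, mem_component.2 ⟨hvw.2.1, huv.tail hvw⟩,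
        hvw.2.2⟩
  refine ⟨fun v hv => (mem_component.1 hv).1, fun v hv w hw => ?_, fun v hv w hw h => ?_⟩
  · exact (reach_self (mem_component.1 hv).2).symm.trans (reach_self (mem_component.1 hw).2)
  · obtain ⟨hvV, huv⟩ := mem_component.1 hv
    exact mem_component.2 ⟨hw, huv.tail ⟨hvV, hw, h⟩⟩

lemma exists_components_card_eq {X Y : Finset Ivl}
    (hle : ∀ C, IsComponent (X ∪ Y) C → (C ∩ Y).card ≤ (C ∩ X).card + 1) :
    ∃ CS : Finset (Finset Ivl), Y.card ≤ X.card + CS.card ∧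
      ∀ C ∈ CS, IsComponent (X ∪ Y) C ∧ (C ∩ Y).card = (C ∩ X).card + 1 := by
  set CS₀ := Y.image (component (X ∪ Y))
  have hcomp : ∀ C ∈ CS₀, IsComponent (X ∪ Y) C := by
    simp only [CS₀, mem_image]
    rintro _ ⟨y, hy, rfl⟩
    exact isComponent_component
  have hdisj : ∀ Z : Finset Ivl, (CS₀ : Set (Finset Ivl)).PairwiseDisjoint (· ∩ Z) :=
    fun Z C hC C' hC' hne => ((hcomp C hC).disjoint (hcomp C' hC') hne).mono
      inter_subset_left inter_subset_left
  have hY : ∑ C ∈ CS₀, (C ∩ Y).card = Y.card := by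
    rw [← card_biUnion (hdisj Y)]
    congr 1
    ext y
    simp only [CS₀, mem_biUnion, mem_image, mem_inter, exists_exists_and_eq_and]
    refine ⟨fun ⟨_, _, _, hy⟩ => hy, fun hy => ⟨y, hy, ?_, hy⟩⟩
    exact mem_component.2 ⟨mem_union_right X hy, Relation.ReflTransGen.refl⟩
  have hX : ∑ C ∈ CS₀, (C ∩ X).card ≤ X.card := by
    rw [← card_biUnion (hdisj X)]
    exact card_le_card (biUnion_subset.2 fun _ _ => inter_subset_right)
  refine ⟨CS₀.filter fun C => (C ∩ Y).card = (C ∩ X).card + 1, ?_, fun C hC => ?_⟩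
  · have hbound : ∀ C ∈ CS₀, (C ∩ Y).card ≤
        (C ∩ X).card + if (C ∩ Y).card = (C ∩ X).card + 1 then 1 else 0 := by
      intro C hC
      have := hle C (hcomp C hC)
      split_ifs with h <;> omega
    have := sum_le_sum hbound
    rw [sum_add_distrib, ← card_filter] at this
    omega
  · exact ⟨hcomp C (mem_filter.1 hC).1, (mem_filter.1 hC).2⟩

section Components

variable {S J X Y C : Finset Ivl}

lemma exists_sorted_enum (hY : IsIndep S Y) {n : ℕ} (hn : Y.card = n) :
    ∃ c : Fin n → Ivl, (∀ i, c i ∈ Y) ∧ (∀ y ∈ Y, ∃ i, c i = y) ∧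
      ∀ i j, i < j → (c i).r < (c j).l := by
  have hinj : Set.InjOn Ivl.l Y := fun x hx y hy hxy =>
    hY.eq_of_meets hx hy (Ivl.meets_of_mem ⟨le_rfl, x.hle⟩ ⟨hxy.symm.le, hxy.le.trans y.hle⟩)
  have hcard : (Y.image Ivl.l).card = n := (card_image_of_injOn hinj).trans hn
  set e := (Y.image Ivl.l).orderEmbOfFin hcard
  choose c hcY hcl using fun i => mem_image.1 ((Y.image Ivl.l).orderEmbOfFin_mem hcard i)
  refine ⟨c, hcY, fun y hy => ?_, fun i j hij => ?_⟩
  · obtain ⟨i, hi⟩ : y.l ∈ Set.range e := by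
      rw [range_orderEmbOfFin]
      exact mem_image_of_mem _ hy
    exact ⟨i, hinj (hcY i) hy ((hcl i).trans hi)⟩
  · have hl : (c i).l < (c j).l := by
      rw [hcl, hcl]
      exact e.strictMono hij
    have hne : c i ≠ c j := fun h => hl.ne (congrArg Ivl.l h)
    rcases Ivl.not_meets_iff.1 (hY.2 _ (hcY i) _ (hcY j) hne) with h | h
    · linarith [(c j).hle]
    · exact h

/-- The walk has to leave the region left of `y₂` through an interval of `X` meeting `y₂`; that
interval also meets `y₁`, since otherwise it would contain `y₁`. -/
lemma exists_linker {V : Finset Ivl} (hX : IsIndep S X) (hY : IsIndep S Y) (hV : V ⊆ X ∪ Y)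
    (hnc : ∀ y ∈ Y, ∀ x ∈ X, ¬ y.strictIn x) {y₁ y₂ : Ivl} (hy₁ : y₁ ∈ Y) (hy₂ : y₂ ∈ Y)
    (hlt : y₁.r < y₂.l) (hgap : ∀ y ∈ Y, y.r < y₂.l → y.r ≤ y₁.r) (h : Reach V y₁ y₂) :
    ∃ x ∈ V, x ∈ X ∧ x.meets y₁ ∧ x.meets y₂ := by
  obtain ⟨w, hwV, z, hzV, hw, hz, hwz⟩ :=
    h.exists_meets_of_not (fun w => w.r < y₂.l) hlt (not_lt.2 y₂.hle)
  have hzl : z.l < y₂.l := hwz.2.trans_lt hw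
  have hzy₂ : z.meets y₂ := ⟨hzl.le.trans y₂.hle, not_lt.1 hz⟩
  have hzX : z ∈ X := by
    refine (mem_union.1 (hV hzV)).resolve_right fun hzY => ?_
    exact hzl.ne (congrArg Ivl.l (hY.eq_of_meets hzY hy₂ hzy₂))
  have hwY : w ∈ Y := by
    refine (mem_union.1 (hV hwV)).resolve_left fun hwX => ?_
    exact hz (hX.eq_of_meets hwX hzX hwz ▸ hw)
  refine ⟨z, hzV, hzX, ?_, hzy₂⟩
  by_cases hwy : w = y₁
  · exact hwy ▸ Ivl.meets_comm.1 hwz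
  · have hwr := hgap w hwY hw
    rcases Ivl.not_meets_iff.1 (hY.2 w hwY y₁ hy₁ hwy) with h | h
    · linarith [w.hle]
    · exact absurd (Ivl.strictIn_of_meets_of_meets (Ivl.meets_comm.1 hwz) hzy₂ h hlt)
        (hnc y₁ hy₁ z hzX)

lemma exists_linkers {V : Finset Ivl} (hX : IsIndep S X) (hY : IsIndep S Y) (hV : V ⊆ X ∪ Y)
    (hnc : ∀ y ∈ Y, ∀ x ∈ X, ¬ y.strictIn x) {m : ℕ} {c : Fin (m + 1) → Ivl}
    (hc : ∀ i, c i ∈ Y) (hcY : ∀ y ∈ Y, ∃ i, c i = y) (hlt : ∀ i j, i < j → (c i).r < (c j).l)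
    (hreach : ∀ i j, Reach V (c i) (c j)) :
    ∃ f : Fin m → Ivl, Function.Injective f ∧
      ∀ i, f i ∈ V ∧ f i ∈ X ∧ (f i).meets (c i.castSucc) ∧ (f i).meets (c i.succ) := by
  have hgap : ∀ i : Fin m, ∀ y ∈ Y, y.r < (c i.succ).l → y.r ≤ (c i.castSucc).r := by
    rintro i y hy hyr
    obtain ⟨j, rfl⟩ := hcY y hy
    rcases le_or_gt j i.castSucc with hj | hj
    · rcases hj.eq_or_lt with rfl | hj
      · exact le_rfl
      · exact (hlt _ _ hj).le.trans (c _).hle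
    · rcases (Fin.castSucc_lt_iff_succ_le.1 hj).eq_or_lt with h | h
      · exact absurd (h ▸ hyr) (not_lt.2 (c j).hle)
      · linarith [hlt _ _ h, (c i.succ).hle, (c j).hle]
  choose f hfV hfX hf₁ hf₂ using fun i : Fin m =>
    exists_linker hX hY hV hnc (hc _) (hc _) (hlt _ _ i.castSucc_lt_succ) (hgap i) (hreach _ _)
  have hne : ∀ i j, i < j → f i ≠ f j := fun i j hij hfij =>
    hnc _ (hc i.succ) _ (hfX j) (Ivl.strictIn_of_meets_of_meets (hfij ▸ hf₁ i) (hf₂ j)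
      (hlt _ _ i.castSucc_lt_succ) (hlt _ _ (Fin.succ_lt_succ_iff.2 hij)))
  refine ⟨f, fun i j hij => ?_, fun i => ⟨hfV i, hfX i, hf₁ i, hf₂ i⟩⟩
  by_contra hij'
  rcases lt_or_gt_of_ne hij' with h | h
  · exact hne i j h hij
  · exact hne j i h hij.symm

lemma isAltPathWith_of_linkers (hJ : IsIndep S J) (hXY : IsExchange S J X Y)
    (hnc : ∀ y ∈ Y, ∀ x ∈ X, ¬ y.strictIn x) {n : ℕ} (hXn : X.card = n) (hYn : Y.card = n + 1)
    {f : Fin n → Ivl} {c : Fin (n + 1) → Ivl} (hc : ∀ i, c i ∈ Y)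
    (hlt : ∀ i j, i < j → (c i).r < (c j).l) (hf : Function.Injective f) (hfX : ∀ i, f i ∈ X)
    (hf₁ : ∀ i, (f i).meets (c i.castSucc)) (hf₂ : ∀ i, (f i).meets (c i.succ)) :
    IsAltPathWith S J X Y n f c := by
  have hcinj : Function.Injective c := by
    intro i j hij
    by_contra hne
    rcases lt_or_gt_of_ne hne with h | h
    · linarith [hij ▸ hlt i j h, (c j).hle]
    · linarith [hij ▸ hlt j i h, (c j).hle]
  have hflt : ∀ i j, i < j → (f i).r < (f j).l := by
    intro i j hij
    have hc' := hlt i.castSucc j.succ (Fin.castSucc_lt_succ_iff.2 hij.le)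
    rcases Ivl.not_meets_iff.1 (hJ.2 _ (hXY.1 (hfX i)) _ (hXY.1 (hfX j)) (hf.ne hij.ne)) with h | h
    · linarith [(hf₁ i).1, (hf₂ j).2]
    · exact h
  have hiff : ∀ i j, (f i).meets (c j) ↔ j = i.castSucc ∨ j = i.succ := by
    refine fun i j => ⟨fun h => ?_, ?_⟩
    · by_contra hj
      rcases lt_trichotomy j i.castSucc with hj' | rfl | hj'
      · exact hnc _ (hc i.castSucc) _ (hfX i) (Ivl.strictIn_of_meets_of_meets h (hf₂ i)
          (hlt _ _ hj') (hlt _ _ i.castSucc_lt_succ))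
      · exact hj (Or.inl rfl)
      · have hj'' : i.succ < j :=
          (Fin.castSucc_lt_iff_succ_le.1 hj').lt_of_ne fun h' => hj (Or.inr h'.symm)
        exact hnc _ (hc i.succ) _ (hfX i) (Ivl.strictIn_of_meets_of_meets (hf₁ i) h
          (hlt _ _ i.castSucc_lt_succ) (hlt _ _ hj''))
    · rintro (rfl | rfl)
      · exact hf₁ i
      · exact hf₂ i
  refine ⟨hXY.1, hXY.2.1, hXn, hYn, hXY.2.2, hfX, hc, hf, hcinj, hflt, hlt, hiff, ?_⟩
  intro x hx hxX j
  refine hXY.2.2.2 x (mem_union_left _ (mem_sdiff.2 ⟨hx, hxX⟩)) (c j) (mem_union_right _ (hc j)) ?_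
  rintro rfl
  exact (mem_sdiff.1 (hXY.2.1 (hc j))).2 hx

lemma IsExchange.inter_component (hJ : IsIndep S J) (hXY : IsExchange S J X Y)
    (hC : IsComponent (X ∪ Y) C) : IsExchange S J (C ∩ X) (C ∩ Y) := by
  refine ⟨inter_subset_right.trans hXY.1, inter_subset_right.trans hXY.2.1, ?_⟩
  have hY : IsIndep S Y := hXY.2.2.subset subset_union_right
  refine hJ.sdiff_union (hY.subset inter_subset_right) fun x hx y hy hxy => ?_
  obtain ⟨hxJ, hxC⟩ := mem_sdiff.1 hx
  by_cases hxX : x ∈ X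
  · exact hxC (mem_inter.2 ⟨hC.mem_of_meets y (mem_inter.1 hy).1 x (mem_union_left _ hxX)
      (Ivl.meets_comm.1 hxy), hxX⟩)
  · refine hXY.2.2.2 x (mem_union_left _ (mem_sdiff.2 ⟨hxJ, hxX⟩)) y
      (mem_union_right _ (mem_inter.1 hy).2) ?_ hxy
    rintro rfl
    exact (mem_sdiff.1 (hXY.2.1 (mem_inter.1 hy).2)).2 hxJ

lemma IsComponent.exists_sorted_linkers (hJ : IsIndep S J) (hnc : NoContainment S J)
    (hXY : IsExchange S J X Y) (hC : IsComponent (X ∪ Y) C) {m : ℕ}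
    (hm : (C ∩ Y).card = m + 1) :
    ∃ c : Fin (m + 1) → Ivl, ∃ f : Fin m → Ivl, (∀ i, c i ∈ C ∩ Y) ∧
      (∀ i j, i < j → (c i).r < (c j).l) ∧ Function.Injective f ∧
      ∀ i, f i ∈ C ∩ X ∧ (f i).meets (c i.castSucc) ∧ (f i).meets (c i.succ) := by
  have hCXY := hXY.inter_component hJ hC
  have hX : IsIndep S (C ∩ X) := hJ.subset hCXY.1
  have hY : IsIndep S (C ∩ Y) := hCXY.2.2.subset subset_union_right
  have hV : C ⊆ (C ∩ X) ∪ (C ∩ Y) := fun w hw => by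
    rcases mem_union.1 (hC.subset hw) with h | h
    · exact mem_union_left _ (mem_inter.2 ⟨hw, h⟩)
    · exact mem_union_right _ (mem_inter.2 ⟨hw, h⟩)
  obtain ⟨c, hc, hcY, hlt⟩ := exists_sorted_enum hY hm
  obtain ⟨f, hf, hfX⟩ := exists_linkers hX hY hV
    (fun y hy x hx => hnc y (hCXY.2.1 hy) x (hCXY.1 hx)) hc hcY hlt
    (fun i j => hC.reach _ (mem_inter.1 (hc i)).1 _ (mem_inter.1 (hc j)).1)
  exact ⟨c, f, hc, hlt, hf, fun i => (hfX i).2⟩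

lemma IsComponent.card_inter_le (hJ : IsIndep S J) (hnc : NoContainment S J)
    (hXY : IsExchange S J X Y) (hC : IsComponent (X ∪ Y) C) :
    (C ∩ Y).card ≤ (C ∩ X).card + 1 := by
  rcases Nat.eq_zero_or_pos (C ∩ Y).card with h | h
  · omega
  obtain ⟨m, hm⟩ := Nat.exists_eq_add_one_of_ne_zero h.ne'
  obtain ⟨c, f, -, -, hf, hfX⟩ := hC.exists_sorted_linkers hJ hnc hXY hm
  have := card_le_card_of_injOn (s := univ) f (fun i _ => (hfX i).1) hf.injOn
  rw [card_univ, Fintype.card_fin] at this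
  omega

lemma IsComponent.isAltPath (hJ : IsIndep S J) (hnc : NoContainment S J)
    (hXY : IsExchange S J X Y) (hC : IsComponent (X ∪ Y) C)
    (hcard : (C ∩ Y).card = (C ∩ X).card + 1) : IsAltPath S J (C ∩ X) (C ∩ Y) := by
  obtain ⟨c, f, hc, hlt, hf, hfX⟩ := hC.exists_sorted_linkers hJ hnc hXY hcard
  have hCXY := hXY.inter_component hJ hC
  exact ⟨_, f, c, isAltPathWith_of_linkers hJ hCXY
    (fun y hy x hx => hnc y (hCXY.2.1 hy) x (hCXY.1 hx)) rfl hcard hc hlt hf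
    (fun i => (hfX i).1) (fun i => (hfX i).2.1) (fun i => (hfX i).2.2)⟩

lemma IsExchange.exists_components (hJ : IsIndep S J) (hnc : NoContainment S J)
    (hXY : IsExchange S J X Y) :
    ∃ CS : Finset (Finset Ivl), Y.card ≤ X.card + CS.card ∧
      ∀ C ∈ CS, IsComponent (X ∪ Y) C ∧ IsAltPath S J (C ∩ X) (C ∩ Y) := by
  obtain ⟨CS, hCS, hC⟩ := exists_components_card_eq fun C hC => hC.card_inter_le hJ hnc hXY
  exact ⟨CS, hCS, fun C hC' => ⟨(hC C hC').1, (hC C hC').1.isAltPath hJ hnc hXY (hC C hC').2⟩⟩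

lemma IsExchange.exists_isAltPath (hJ : IsIndep S J) (hnc : NoContainment S J)
    (hXY : IsExchange S J X Y) (hlt : X.card < Y.card) : ∃ A ⊆ X, ∃ B, IsAltPath S J A B := by
  obtain ⟨CS, hCS, hC⟩ := hXY.exists_components hJ hnc
  obtain ⟨C, hC'⟩ := card_pos.1 (by omega : 0 < CS.card)
  exact ⟨C ∩ X, inter_subset_right, C ∩ Y, (hC C hC').2⟩

end Components

lemma IsExchange.mem_of_isComponent {S J X Y C : Finset Ivl} (hJ : IsIndep S J)
    (hXY : IsExchange S J X Y) (hC : IsComponent (X ∪ Y) C) {u v z : Ivl} (hu : u ∈ C)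
    (hv : v ∈ C) (hz : z ∈ J) (huz : u.l ≤ z.l) (hzv : z.l ≤ v.r) : z ∈ X := by
  obtain ⟨w, hwC, hw⟩ := hC.exists_cover hu hv huz hzv
  have hwz : w.meets z := Ivl.meets_of_mem hw ⟨le_rfl, z.hle⟩
  by_contra hzX
  rcases mem_union.1 (hC.subset hwC) with hwX | hwY
  · exact hzX (hJ.eq_of_meets (hXY.1 hwX) hz hwz ▸ hwX)
  · refine hXY.2.2.2 w (mem_union_right _ hwY) z (mem_union_left _ (mem_sdiff.2 ⟨hz, hzX⟩))
      ?_ hwz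
    rintro rfl
    exact (mem_sdiff.1 (hXY.2.1 hwY)).2 hz

lemma IsIndep.insert {S Y : Finset Ivl} {y : Ivl} (hY : IsIndep S Y) (hy : y ∈ S)
    (h : ∀ z ∈ Y, ¬ y.meets z) : IsIndep S (insert y Y) := by
  refine ⟨insert_subset hy hY.1, ?_⟩
  simp only [mem_insert]
  rintro x (rfl | hx) z (rfl | hz) hne
  · exact absurd rfl hne
  · exact h z hz
  · exact fun hxz => h x hx (Ivl.meets_comm.1 hxz)
  · exact hY.2 x hx z hz hne

lemma IsKValid.mono {S I : Finset Ivl} {k k' : ℕ} (h : IsKValid S k I) (hk : k' ≤ k) :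
    IsKValid S k' I :=
  ⟨h.1.mono hk, h.2⟩

namespace IsAltPathWith

variable {S I A B : Finset Ivl} {t : ℕ} {a : Fin t → Ivl} {b : Fin (t + 1) → Ivl}
  (h : IsAltPathWith S I A B t a b)
include h

lemma isIndep : IsIndep S ((I \ A) ∪ B) := h.2.2.2.2.1

lemma isExchange : IsExchange S I A B := ⟨h.1, h.2.1, h.isIndep⟩

lemma a_mem (i : Fin t) : a i ∈ A := h.2.2.2.2.2.1 i

lemma b_mem (j : Fin (t + 1)) : b j ∈ B := h.2.2.2.2.2.2.1 j

lemma a_injective : Function.Injective a := h.2.2.2.2.2.2.2.1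

lemma b_injective : Function.Injective b := h.2.2.2.2.2.2.2.2.1

lemma card_eq : B.card = A.card + 1 := by rw [h.2.2.1, h.2.2.2.1]

lemma meets_iff (i : Fin t) (j : Fin (t + 1)) :
    (a i).meets (b j) ↔ j = i.castSucc ∨ j = i.succ :=
  h.2.2.2.2.2.2.2.2.2.2.2.1 i j

lemma meets_castSucc (i : Fin t) : (a i).meets (b i.castSucc) := (h.meets_iff i _).2 (Or.inl rfl)

lemma meets_succ (i : Fin t) : (a i).meets (b i.succ) := (h.meets_iff i _).2 (Or.inr rfl)

lemma b_lt {i j : Fin (t + 1)} (hij : i < j) : (b i).r < (b j).l := h.2.2.2.2.2.2.2.2.2.2.1 i j hij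

lemma b_le {i j : Fin (t + 1)} (hij : i ≤ j) : (b i).l ≤ (b j).l ∧ (b i).r ≤ (b j).r := by
  rcases hij.eq_or_lt with rfl | hij
  · exact ⟨le_rfl, le_rfl⟩
  · exact ⟨(b i).hle.trans (h.b_lt hij).le, (h.b_lt hij).le.trans (b j).hle⟩

lemma not_meets {x : Ivl} (hx : x ∈ I) (hxA : x ∉ A) (j : Fin (t + 1)) : ¬ x.meets (b j) :=
  h.2.2.2.2.2.2.2.2.2.2.2.2 x hx hxA j

lemma exists_eq_a {x : Ivl} (hx : x ∈ A) : ∃ i, a i = x := by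
  obtain ⟨i, -, hi⟩ := surj_on_of_inj_on_of_card_le (s := univ) (fun i _ => a i)
    (fun i _ => h.a_mem i) (fun _ _ _ _ hij => h.a_injective hij)
    (by rw [card_univ, Fintype.card_fin, h.2.2.1]) x hx
  exact ⟨i, hi.symm⟩

lemma exists_eq_b {y : Ivl} (hy : y ∈ B) : ∃ j, b j = y := by
  obtain ⟨j, -, hj⟩ := surj_on_of_inj_on_of_card_le (s := univ) (fun j _ => b j)
    (fun j _ => h.b_mem j) (fun _ _ _ _ hij => h.b_injective hij)
    (by rw [card_univ, Fintype.card_fin, h.2.2.2.1]) y hy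
  exact ⟨j, hj.symm⟩

lemma lt_or_lt_of_not_mem (hI : IsIndep S I) {x : Ivl} (hx : x ∈ I) (hxA : x ∉ A) :
    x.r < (b 0).l ∨ (b (Fin.last t)).r < x.l := by
  refine (Ivl.not_meets_iff.1 (h.not_meets hx hxA 0)).symm.imp_right fun h0 => ?_
  refine Fin.induction (motive := fun j => (b j).r < x.l) h0 (fun i hi => ?_) (Fin.last t)
  have hai : (a i).r < x.l := by
    have hne : a i ≠ x := fun hax => hxA (hax ▸ h.a_mem i)
    rcases Ivl.not_meets_iff.1 (hI.2 _ (h.1 (h.a_mem i)) x hx hne) with h' | h'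
    · linarith [(h.meets_castSucc i).1, x.hle]
    · exact h'
  rcases Ivl.not_meets_iff.1 (h.not_meets hx hxA i.succ) with h' | h'
  · exact h'
  · linarith [(h.meets_succ i).2, x.hle]

lemma b_zero_l_le (i : Fin t) : (b 0).l ≤ (a i).r :=
  (h.b_le (Fin.zero_le _)).1.trans (h.meets_castSucc i).2

lemma le_b_last_r (i : Fin t) : (a i).l ≤ (b (Fin.last t)).r :=
  (h.meets_castSucc i).1.trans (h.b_le (Fin.le_last _)).2

end IsAltPathWith

lemma IsAltPath.lt_card {S I A B : Finset Ivl} {k : ℕ} (hI : IsKMaximal S k I)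
    (h : IsAltPath S I A B) : k < A.card := by
  obtain ⟨t, a, b, hab⟩ := h
  exact hI.lt_card hab.isExchange hab.card_eq

namespace LREP

variable {S I A B : Finset Ivl} {t : ℕ} {a : Fin t → Ivl} {b : Fin (t + 1) → Ivl}
  (hL : LREP S I t a b)
include hL

lemma not_strictIn_a (h : IsAltPathWith S I A B t a b) (i : Fin t) (j : Fin (t + 1)) :
    ¬ (a i).strictIn (b j) := by
  intro hs
  have hle := (hL.1 i).1
  rcases (h.meets_iff i j).1 (Ivl.meets_comm.1 (hs.meets)) with rfl | rfl
  · linarith [hs.2]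
  · linarith [hs.1, (h.meets_castSucc i).1]

lemma not_strictIn_succ {y : Ivl} (hy : y ∈ S) (i : Fin t) (hay : (a i).meets y) :
    ¬ y.strictIn (b i.succ) := by
  intro hs
  have := (hL.1 i).2 y hy (by linarith [(hL.1 i).1.1, hs.1]) hay.2
  linarith [hs.2]

lemma not_strictIn_zero (h : IsAltPathWith S I A B t a b) {y : Ivl} (hy : y ∈ S) (h0 : 0 < t) :
    ¬ y.strictIn (b 0) := by
  intro hs
  have hb : (b 0).r < (b (⟨0, h0⟩ : Fin t).succ).l := h.b_lt (Fin.succ_pos _)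
  have := (hL.2 h0).2 y hy (fun x hx hxr => ((hL.2 h0).1.1 x hx hxr).trans hs.1.le)
    (by linarith [y.hle, hs.2, (h.meets_succ ⟨0, h0⟩).2])
  linarith [hs.2]

end LREP

namespace IsAltPathWith

variable {S I A B : Finset Ivl} {t : ℕ} {a : Fin t → Ivl} {b : Fin (t + 1) → Ivl}

lemma isExchange_suffix (h : IsAltPathWith S I A B t a b) (hI : IsIndep S I) {y : Ivl}
    (hy : y ∈ S \ I) {m : Fin t} (hys : y.strictIn (b m.castSucc))
    (huniq : ∀ i, (a i).meets y → i = m) :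
    IsExchange S I ((Ici m).image a) (insert y ((Ioi m.castSucc).image b)) := by
  have hBY : (Ioi m.castSucc).image b ⊆ B := image_subset_iff.2 fun j _ => h.b_mem j
  refine ⟨(image_subset_iff.2 fun i _ => h.a_mem i).trans h.1,
    insert_subset hy (hBY.trans h.2.1), hI.sdiff_union ?_ ?_⟩
  · refine ((h.isIndep.subset subset_union_right).subset hBY).insert (mem_sdiff.1 hy).1 ?_
    simp only [mem_image, mem_Ioi]
    rintro _ ⟨j, hj, rfl⟩ hyb
    exact absurd (hys.meets_of_meets (Ivl.meets_comm.1 hyb)).1 (not_le.2 (h.b_lt hj))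
  intro x hx z hz hxz
  obtain ⟨hxI, hxX⟩ := mem_sdiff.1 hx
  simp only [mem_insert, mem_image, mem_Ioi] at hz
  by_cases hxA : x ∈ A
  · obtain ⟨i, rfl⟩ := h.exists_eq_a hxA
    have hi : i < m := not_le.1 fun hi => hxX (mem_image_of_mem a (mem_Ici.2 hi))
    rcases hz with rfl | ⟨j, hj, rfl⟩
    · exact hi.ne (huniq i hxz)
    · rcases (h.meets_iff i j).1 hxz with rfl | rfl
      · exact absurd hj (not_lt.2 (Fin.castSucc_le_castSucc_iff.2 hi.le))
      · exact absurd hj (not_lt.2 (Fin.succ_le_castSucc_iff.2 hi))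
  · rcases hz with rfl | ⟨j, -, rfl⟩
    · exact h.not_meets hxI hxA _ (hys.meets_of_meets hxz)
    · exact h.not_meets hxI hxA j hxz

/-- The suffix exchange gains an interval, so it contains an alternating path; that path avoids
`a 0` and thus removes fewer intervals than `A`. -/
lemma false_of_strictIn (h : IsAltPathWith S I A B t a b) (hI : IsIndep S I)
    (hnc : NoContainment S I) (hsmall : ¬ ∃ A' B', A' ⊂ A ∧ IsAltPath S I A' B') {y : Ivl}
    (hy : y ∈ S \ I) (hyB : y ∉ B) {m : Fin t} (hm : 0 < (m : ℕ))
    (hys : y.strictIn (b m.castSucc)) (huniq : ∀ i, (a i).meets y → i = m) : False := by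
  have hcard : ((Ici m).image a).card < (insert y ((Ioi m.castSucc).image b)).card := by
    have hyY : y ∉ (Ioi m.castSucc).image b := fun hy' =>
      hyB (image_subset_iff.2 (fun j _ => h.b_mem j) hy')
    have hX : ((Ici m).image a).card ≤ t - m := card_image_le.trans_eq (Fin.card_Ici m)
    rw [card_insert_of_notMem hyY, card_image_of_injective _ h.b_injective, Fin.card_Ioi,
      Fin.val_castSucc]
    omega
  obtain ⟨A', hA'X, B', hA'B'⟩ :=
    (h.isExchange_suffix hI hy hys huniq).exists_isAltPath hI hnc hcard
  have h0 : 0 < t := hm.trans m.isLt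
  have ha0 : a ⟨0, h0⟩ ∉ (Ici m).image a := by
    simp only [mem_image, mem_Ici]
    rintro ⟨i, hi, hia⟩
    obtain rfl := h.a_injective hia
    exact (not_le.2 hm) (Fin.le_def.1 hi)
  refine hsmall ⟨A', B', (ssubset_iff_of_subset
    (hA'X.trans (image_subset_iff.2 fun i _ => h.a_mem i))).2 ?_, hA'B'⟩
  exact ⟨a ⟨0, h0⟩, h.a_mem _, fun h' => ha0 (hA'X h')⟩

end IsAltPathWith

lemma noContainment_of_isProperAltPath {S I A B : Finset Ivl} (hI : IsKValid S 0 I)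
    (hp : IsProperAltPath S I A B) : NoContainment S ((I \ A) ∪ B) := by
  obtain ⟨⟨⟨t, a, b, h⟩, hsmall⟩, hL⟩ := hp
  replace hL := hL t a b h
  rintro y hy x hx hyx
  obtain ⟨hyS, hyI'⟩ := mem_sdiff.1 hy
  rcases mem_union.1 hx with hxIA | hxB
  · obtain ⟨hxI, -⟩ := mem_sdiff.1 hxIA
    by_cases hyI : y ∈ I
    · obtain rfl := hI.1.1.eq_of_meets hxI hyI (Ivl.strictIn.meets hyx)
      exact lt_irrefl _ hyx.1
    · exact hI.2 y (mem_sdiff.2 ⟨hyS, hyI⟩) x hxI hyx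
  obtain ⟨j, rfl⟩ := h.exists_eq_b hxB
  by_cases hyI : y ∈ I
  · have hyA : y ∈ A := not_not.1 fun hyA => hyI' (mem_union_left _ (mem_sdiff.2 ⟨hyI, hyA⟩))
    obtain ⟨i, rfl⟩ := h.exists_eq_a hyA
    exact hL.not_strictIn_a h i j hyx
  obtain ⟨z, hzI, hzy⟩ := hI.1.exists_meets (mem_sdiff.2 ⟨hyS, hyI⟩)
  have hzA : z ∈ A := not_not.1 fun hzA =>
    h.not_meets hzI hzA j (Ivl.strictIn.meets_of_meets hyx hzy)
  obtain ⟨m, rfl⟩ := h.exists_eq_a hzA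
  have hprev : ∀ i, (a i).meets y → j ≠ i.succ := fun i hi hj =>
    hL.not_strictIn_succ hyS i hi (hj ▸ hyx)
  have hcast : ∀ i, (a i).meets y → j = i.castSucc := fun i hi =>
    ((h.meets_iff i j).1 (Ivl.strictIn.meets_of_meets hyx hi)).resolve_right (hprev i hi)
  obtain rfl := hcast m hzy
  rcases Nat.eq_zero_or_pos m with hm | hm
  · have h0 : 0 < t := m.pos
    obtain rfl : m = ⟨0, h0⟩ := Fin.ext hm
    exact hL.not_strictIn_zero h hyS h0 hyx
  · exact h.false_of_strictIn hI.1.1 hI.2 hsmall (mem_sdiff.2 ⟨hyS, hyI⟩)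
      (fun hyB => hyI' (mem_union_right _ hyB)) hm hyx
      fun i hi => Fin.castSucc_injective _ (hcast i hi).symm

lemma nonempty_inter_and_sdiff_of_isAltPath {S I A A₁ B₁ A₂ B₂ A' : Finset Ivl} {k : ℕ}
    (hI : IsKMaximal S k I) (hsmall : ¬ ∃ A'' B'', A'' ⊂ A ∧ IsAltPath S I A'' B'')
    (h₁ : IsAltPath S I A₁ B₁) (h₂ : IsAltPath S I A₂ B₂) (hdisj : Disjoint A₁ A₂)
    (hA₁ : A₁ \ A ⊆ A') (hA₂ : A₂ \ A ⊆ A') (hk : A'.card ≤ k) :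
    (A₁ ∩ A).Nonempty ∧ (A₁ \ A).Nonempty := by
  have hk₁ := h₁.lt_card hI
  have hk₂ := h₂.lt_card hI
  constructor
  · by_contra hA
    have : A₁ ⊆ A' := fun x hx =>
      hA₁ (mem_sdiff.2 ⟨hx, fun hxA => hA ⟨x, mem_inter.2 ⟨hx, hxA⟩⟩⟩)
    linarith [card_le_card this]
  · by_contra hA
    have hsub : A₁ ⊆ A := fun x hx => not_not.1 fun hxA => hA ⟨x, mem_sdiff.2 ⟨hx, hxA⟩⟩
    obtain rfl : A₁ = A := by
      by_contra hne
      exact hsmall ⟨A₁, B₁, ssubset_of_subset_of_ne hsub hne, h₁⟩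
    have : A₂ ⊆ A' := fun x hx => hA₂ (mem_sdiff.2 ⟨hx, disjoint_right.1 hdisj hx⟩)
    linarith [card_le_card this]

namespace IsAltPathWith

variable {S I A B : Finset Ivl} {t : ℕ} {a : Fin t → Ivl} {b : Fin (t + 1) → Ivl}

lemma false_of_isExchange {A' B' : Finset Ivl} {k : ℕ} (hI : IsKValid S k I)
    (h : IsAltPathWith S I A B t a b) (hsmall : ¬ ∃ A'' B'', A'' ⊂ A ∧ IsAltPath S I A'' B'')
    (hA'B' : IsExchange S ((I \ A) ∪ B) A' B') (hcard : B'.card = A'.card + 1)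
    (hk : A'.card ≤ k)
    (hside : ∀ u ∈ A', ∀ v ∈ A', u.r < (b 0).l → (b (Fin.last t)).r < v.l → False) : False := by
  set E := (((I \ A) ∪ B) \ A') ∪ B' with hEdef
  obtain ⟨hE, hEcard, hA'⟩ := h.isExchange.comp hA'B' hEdef
  have := h.card_eq
  obtain ⟨CS, hCS, hC⟩ := hE.exists_components hI.1.1 hI.2
  obtain ⟨C₁, hC₁, C₂, hC₂, hne⟩ := one_lt_card.1 (by omega : 1 < CS.card)
  have hdisj : Disjoint (C₁ ∩ (I \ E)) (C₂ ∩ (I \ E)) :=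
    ((hC C₁ hC₁).1.disjoint (hC C₂ hC₂).1 hne).mono inter_subset_left inter_subset_left
  have hsub (C : Finset Ivl) : (C ∩ (I \ E)) \ A ⊆ A' :=
    (sdiff_subset_sdiff inter_subset_right le_rfl).trans hA'
  obtain ⟨⟨x₁, hx₁⟩, ⟨u₁, hu₁⟩⟩ := nonempty_inter_and_sdiff_of_isAltPath hI.1 hsmall
    (hC C₁ hC₁).2 (hC C₂ hC₂).2 hdisj (hsub C₁) (hsub C₂) hk
  obtain ⟨⟨x₂, hx₂⟩, ⟨u₂, hu₂⟩⟩ := nonempty_inter_and_sdiff_of_isAltPath hI.1 hsmall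
    (hC C₂ hC₂).2 (hC C₁ hC₁).2 hdisj.symm (hsub C₂) (hsub C₁) hk
  obtain ⟨i₁, rfl⟩ := h.exists_eq_a (mem_inter.1 hx₁).2
  obtain ⟨i₂, rfl⟩ := h.exists_eq_a (mem_inter.1 hx₂).2
  have hu₁A' := hsub C₁ hu₁
  have hu₂A' := hsub C₂ hu₂
  simp only [mem_sdiff, mem_inter] at hx₁ hx₂ hu₁ hu₂
  rcases h.lt_or_lt_of_not_mem hI.1.1 hu₁.1.2.1 hu₁.2 with h₁ | h₁ <;>
    rcases h.lt_or_lt_of_not_mem hI.1.1 hu₂.1.2.1 hu₂.2 with h₂ | h₂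
  · exact hne ((hC C₁ hC₁).1.eq_of_cover (hC C₂ hC₂).1 hu₁.1.1 hx₁.1.1 hu₂.1.1 hx₂.1.1
      (u₁.hle.trans h₁.le) (h.b_zero_l_le i₁) (u₂.hle.trans h₂.le) (h.b_zero_l_le i₂))
  · exact hside u₁ hu₁A' u₂ hu₂A' h₁ h₂
  · exact hside u₂ hu₂A' u₁ hu₁A' h₂ h₁
  · exact hne ((hC C₁ hC₁).1.eq_of_cover (hC C₂ hC₂).1 hx₁.1.1 hu₁.1.1 hx₂.1.1 hu₂.1.1
      (h.le_b_last_r i₁) (h₁.le.trans u₁.hle) (h.le_b_last_r i₂) (h₂.le.trans u₂.hle))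

end IsAltPathWith

lemma isKMaximal_of_isProperAltPath {S I A B : Finset Ivl} {k : ℕ} (hI : IsKValid S k I)
    (hp : IsProperAltPath S I A B) : IsKMaximal S k ((I \ A) ∪ B) := by
  have hnc := noContainment_of_isProperAltPath (hI.mono (Nat.zero_le k)) hp
  obtain ⟨⟨⟨t, a, b, h⟩, hsmall⟩, -⟩ := hp
  have hI' := h.isIndep
  refine ⟨hI', fun n hn A₀ hA₀ B₀ hB₀ hA₀n hB₀n hind => ?_⟩
  have hX : IsExchange S ((I \ A) ∪ B) A₀ B₀ := ⟨hA₀, hB₀, hind⟩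
  obtain ⟨CS, hCS, hC⟩ := hX.exists_components hI' hnc
  obtain ⟨C, hC'⟩ := card_pos.1 (by omega : 0 < CS.card)
  obtain ⟨hcomp, t', a', b', h'⟩ := hC C hC'
  refine h.false_of_isExchange hI hsmall h'.isExchange h'.card_eq
    ((card_le_card inter_subset_right).trans (hA₀n.trans_le hn)) fun u hu v hv hu' hv' => ?_
  have hBA : B ⊆ A₀ := by
    intro y hy
    obtain ⟨j, rfl⟩ := h.exists_eq_b hy
    exact hX.mem_of_isComponent hI' hcomp (mem_inter.1 hu).1 (mem_inter.1 hv).1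
      (mem_union_right _ hy) (by linarith [u.hle, (h.b_le (Fin.zero_le j)).1])
      (by linarith [v.hle, (b j).hle, (h.b_le (Fin.le_last j)).2])
  have := card_le_card hBA
  have := h.card_eq
  have := IsAltPath.lt_card hI.1 ⟨t, a, b, h⟩
  omega

theorem stmt5_general (S : Finset Ivl) (k : ℕ) (I : Finset Ivl) (hI : IsKValid S k I)
    (A B : Finset Ivl) (hp : IsProperAltPath S I A B) :
    IsKValid S k ((I \ A) ∪ B) :=
  ⟨isKMaximal_of_isProperAltPath hI hp,
    noContainment_of_isProperAltPath (hI.mono (Nat.zero_le k)) hp⟩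

/-- If `I` is a `k`-valid independent set of `S` and `(A, B)` is a proper
alternating path with `|A| = t`, `|B| = t + 1` for some `k < t ≤ 2k + 1`, then
`(I \ A) ∪ B` is a `k`-valid independent set of `S`. -/
theorem stmt5 (S : Finset Ivl) (k : ℕ) (I : Finset Ivl) (hI : IsKValid S k I)
    (A B : Finset Ivl) (t : ℕ) (hAcard : A.card = t) (hBcard : B.card = t + 1)
    (hkt : k < t) (ht : t ≤ 2 * k + 1)
    (hp : IsProperAltPath S I A B) :
    IsKValid S k ((I \ A) ∪ B) :=
  stmt5_general S k I hI A B hp
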